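/- arXiv:1910.00708 — 4 statements merged into one kernel-verified Lean document; each statement's English description precedes it below -/
import Mathlib

section
/- Let A0, A1, B0, B1 be nonempty finite index types. For linear maps X, Y : Matrix ι ι ℂ →ₗ[ℂ] Matrix κ κ ℂ define the max-relative robustness r(X‖Y) := sInf {t : ℝ | 0 ≤ t ∧ (t • J(Y) − J(X)).PosSemidef}. Let N, E be quantum channels from Matrix A0 A0 ℂ to Matrix A1 A1 ℂ and let M, F be quantum channels from Matrix B0 B0 ℂ to Matrix B1 B1 ℂ, and assume there exist t₁ ≥ 0 and t₂ ≥ 0 with (t₁ • J(E) − J(N)).PosSemidef and (t₂ • J(F) − J(M)).PosSemidef. Then r(N ⊗ M ‖ E ⊗ F) = r(N‖E) · r(M‖F); equivalently, the channel max-relative entropy D_max(N‖E) = log₂ r(N‖E) is additive under tensor products of channels. -/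
open Matrix Kronecker ComplexOrder

noncomputable section

/-- Dephasing (decoherence) map as a linear map. -/
def deph {ι : Type*} [DecidableEq ι] : Matrix ι ι ℂ →ₗ[ℂ] Matrix ι ι ℂ where
  toFun M := Matrix.of fun i j => if i = j then M i j else 0
  map_add' X Y := by
    ext i j
    by_cases h : i = j <;> simp [h]
  map_smul' c X := by
    ext i j
    by_cases h : i = j <;> simp [h]

/-- Choi matrix of a linear map between matrix algebras. -/
def choi {ι κ : Type*} [Fintype ι] [DecidableEq ι]
    (Φ : Matrix ι ι ℂ →ₗ[ℂ] Matrix κ κ ℂ) : Matrix (ι × κ) (ι × κ) ℂ :=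
  Matrix.of fun p q => Φ (Matrix.single p.1 q.1 1) p.2 q.2

/-- Completely positive: the Choi matrix is positive semidefinite. -/
def IsCP {ι κ : Type*} [Fintype ι] [DecidableEq ι] [Fintype κ]
    (Φ : Matrix ι ι ℂ →ₗ[ℂ] Matrix κ κ ℂ) : Prop := (choi Φ).PosSemidef

/-- Trace preserving. -/
def IsTP {ι κ : Type*} [Fintype ι] [Fintype κ]
    (Φ : Matrix ι ι ℂ →ₗ[ℂ] Matrix κ κ ℂ) : Prop := ∀ X, (Φ X).trace = X.trace

/-- Quantum channel: CP and TP. -/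
def IsChannel {ι κ : Type*} [Fintype ι] [DecidableEq ι] [Fintype κ]
    (Φ : Matrix ι ι ℂ →ₗ[ℂ] Matrix κ κ ℂ) : Prop := IsCP Φ ∧ IsTP Φ

/-- Max-relative robustness `r(X‖Y)` between two maps. -/
def maxRelRobust {ι κ : Type*} [Fintype ι] [DecidableEq ι] [Fintype κ]
    (X Y : Matrix ι ι ℂ →ₗ[ℂ] Matrix κ κ ℂ) : ℝ :=
  sInf {t : ℝ | 0 ≤ t ∧ (t • choi Y - choi X).PosSemidef}


namespace MaxRelAux

variable {n m : Type*} [Fintype n] [Fintype m]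

/-- Complex quadratic form. -/
def qC (A : Matrix n n ℂ) (x : n → ℂ) : ℂ := star x ⬝ᵥ A *ᵥ x

/-- Real quadratic form. -/
def qf (A : Matrix n n ℂ) (x : n → ℂ) : ℝ := (qC A x).re

lemma star_qC {A : Matrix n n ℂ} (hA : A.IsHermitian) (x : n → ℂ) :
    star (qC A x) = qC A x := by
  unfold qC
  rw [← star_dotProduct, star_mulVec, dotProduct_mulVec, hA.eq]

lemma qC_im {A : Matrix n n ℂ} (hA : A.IsHermitian) (x : n → ℂ) :
    (qC A x).im = 0 := by
  have := star_qC hA x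
  rw [Complex.star_def, Complex.conj_eq_iff_im] at this
  exact this

lemma qC_eq_re {A : Matrix n n ℂ} (hA : A.IsHermitian) (x : n → ℂ) :
    qC A x = (qf A x : ℂ) := by
  rw [qf, Complex.ext_iff]
  simp [qC_im hA]

lemma real_smul_eq (t : ℝ) (A : Matrix n n ℂ) : t • A = (t : ℂ) • A := by
  ext i j
  simp [Complex.real_smul]

lemma psd_iff_qf {A : Matrix n n ℂ} (hA : A.IsHermitian) :
    A.PosSemidef ↔ ∀ x, 0 ≤ qf A x := by
  constructor
  · intro h x
    exact h.re_dotProduct_nonneg x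
  · intro h
    rw [posSemidef_iff_dotProduct_mulVec]
    refine ⟨hA, fun x => ?_⟩
    rw [Complex.nonneg_iff]
    exact ⟨h x, (qC_im hA x).symm⟩

lemma herm_smul_sub {A B : Matrix n n ℂ} (hA : A.IsHermitian) (hB : B.IsHermitian) (t : ℝ) :
    (t • A - B).IsHermitian := by
  have hsm : ((t : ℂ) • A).IsHermitian := by
    unfold Matrix.IsHermitian
    rw [conjTranspose_smul, hA.eq, Complex.star_def, Complex.conj_ofReal]
  rw [real_smul_eq]
  exact hsm.sub hB

lemma qf_smul_sub {A B : Matrix n n ℂ} (t : ℝ) (x : n → ℂ) :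
    qf (t • A - B) x = t * qf A x - qf B x := by
  unfold qf qC
  rw [sub_mulVec, dotProduct_sub, real_smul_eq, smul_mulVec, dotProduct_smul]
  simp [Complex.smul_re]

lemma feasible_iff {A B : Matrix n n ℂ} (hA : A.IsHermitian) (hB : B.IsHermitian) (t : ℝ) :
    (t • A - B).PosSemidef ↔ ∀ x, qf B x ≤ t * qf A x := by
  rw [psd_iff_qf (herm_smul_sub hA hB t)]
  constructor <;> intro h x <;> have := h x <;> rw [qf_smul_sub] at * <;> linarith

/-- Kronecker product of vectors. -/
def vecKron (x : n → ℂ) (y : m → ℂ) : n × m → ℂ := fun p => x p.1 * y p.2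

lemma mulVec_kron (A : Matrix n n ℂ) (B : Matrix m m ℂ) (x : n → ℂ) (y : m → ℂ) :
    (A ⊗ₖ B) *ᵥ vecKron x y = vecKron (A *ᵥ x) (B *ᵥ y) := by
  ext ⟨i, j⟩
  simp only [mulVec, dotProduct, vecKron, kroneckerMap_apply, Fintype.sum_prod_type,
    Finset.sum_mul_sum]
  exact Finset.sum_congr rfl fun k _ => Finset.sum_congr rfl fun l _ => by ring

lemma dotProduct_kron (x u : n → ℂ) (y v : m → ℂ) :
    vecKron x y ⬝ᵥ vecKron u v = (x ⬝ᵥ u) * (y ⬝ᵥ v) := by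
  simp only [dotProduct, vecKron, Fintype.sum_prod_type, Finset.sum_mul_sum]
  exact Finset.sum_congr rfl fun i _ => Finset.sum_congr rfl fun j _ => by ring

lemma star_vecKron (x : n → ℂ) (y : m → ℂ) :
    star (vecKron x y) = vecKron (star x) (star y) := by
  ext ⟨i, j⟩
  simp [vecKron, star_mul', mul_comm]

lemma qC_kron (A : Matrix n n ℂ) (B : Matrix m m ℂ) (x : n → ℂ) (y : m → ℂ) :
    qC (A ⊗ₖ B) (vecKron x y) = qC A x * qC B y := by
  unfold qC
  rw [mulVec_kron, star_vecKron, dotProduct_kron]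

lemma qf_kron {A : Matrix n n ℂ} {B : Matrix m m ℂ} (hA : A.IsHermitian) (hB : B.IsHermitian)
    (x : n → ℂ) (y : m → ℂ) :
    qf (A ⊗ₖ B) (vecKron x y) = qf A x * qf B y := by
  unfold qf
  rw [qC_kron, qC_eq_re hA, qC_eq_re hB, ← Complex.ofReal_mul, Complex.ofReal_re]
  rfl

lemma conjTranspose_kron (A : Matrix n n ℂ) (B : Matrix m m ℂ) :
    (A ⊗ₖ B)ᴴ = Aᴴ ⊗ₖ Bᴴ := by
  ext ⟨i, j⟩ ⟨k, l⟩
  simp [conjTranspose_apply, star_mul', mul_comm]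

lemma psdKron {A : Matrix n n ℂ} {B : Matrix m m ℂ}
    (hA : A.PosSemidef) (hB : B.PosSemidef) : (A ⊗ₖ B).PosSemidef := by
  exact hA.kronecker hB

lemma psdRsmul {A : Matrix n n ℂ} (hA : A.PosSemidef) {t : ℝ} (ht : 0 ≤ t) :
    (t • A).PosSemidef := by
  have h0 : t • A = t • A - (0 : Matrix n n ℂ) := by rw [sub_zero]
  rw [h0, feasible_iff hA.isHermitian Matrix.isHermitian_zero]
  intro x
  have : qf (0 : Matrix n n ℂ) x = 0 := by simp [qf, qC]
  rw [this]
  exact mul_nonneg ht (hA.re_dotProduct_nonneg x)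

/-- The feasible set. -/
def S (A B : Matrix n n ℂ) : Set ℝ := {t : ℝ | 0 ≤ t ∧ (t • A - B).PosSemidef}

lemma S_bddBelow (A B : Matrix n n ℂ) : BddBelow (S A B) := ⟨0, fun _ ht => ht.1⟩

lemma sInf_S_nonneg {A B : Matrix n n ℂ} (hne : (S A B).Nonempty) : 0 ≤ sInf (S A B) :=
  le_csInf hne fun _ ht => ht.1

/-- The infimum of the feasible set is feasible. -/
lemma sInf_mem_S {A B : Matrix n n ℂ} (hA : A.PosSemidef) (hB : B.PosSemidef)
    (hne : (S A B).Nonempty) : sInf (S A B) ∈ S A B := by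
  set r := sInf (S A B) with hr
  refine ⟨sInf_S_nonneg hne, (feasible_iff hA.isHermitian hB.isHermitian r).mpr fun x => ?_⟩
  have hAx : 0 ≤ qf A x := hA.re_dotProduct_nonneg x
  have hmem : ∀ t ∈ S A B, qf B x ≤ t * qf A x := fun t ht =>
    (feasible_iff hA.isHermitian hB.isHermitian t).mp ht.2 x
  rcases eq_or_lt_of_le hAx with h0 | hpos
  · obtain ⟨t, ht⟩ := hne
    have := hmem t ht
    rw [← h0] at this ⊢
    simpa using this
  · have hlb : qf B x / qf A x ≤ r := le_csInf hne fun t ht =>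
      (div_le_iff₀ hpos).mpr (hmem t ht)
    calc qf B x = (qf B x / qf A x) * qf A x := by field_simp
    _ ≤ r * qf A x := mul_le_mul_of_nonneg_right hlb hAx

lemma mem_S_iff {A B : Matrix n n ℂ} (hA : A.IsHermitian) (hB : B.IsHermitian) (t : ℝ) :
    t ∈ S A B ↔ 0 ≤ t ∧ ∀ x, qf B x ≤ t * qf A x := by
  rw [S, Set.mem_setOf_eq, feasible_iff hA hB]

lemma sInf_S_pos {A B : Matrix n n ℂ} (hA : A.PosSemidef) (hB : B.PosSemidef)
    (hne : (S A B).Nonempty) (hx : ∃ x, 0 < qf B x) : 0 < sInf (S A B) := by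
  obtain ⟨x0, hx0⟩ := hx
  have hr := sInf_mem_S hA hB hne
  have h1 := (feasible_iff hA.isHermitian hB.isHermitian _).mp hr.2 x0
  by_contra hcon
  push_neg at hcon
  have : sInf (S A B) = 0 := le_antisymm hcon hr.1
  rw [this, zero_mul] at h1
  linarith

/-- Core multiplicativity lemma. -/
lemma core {P Q : Matrix n n ℂ} {P' Q' : Matrix m m ℂ}
    (hP : P.PosSemidef) (hQ : Q.PosSemidef) (hP' : P'.PosSemidef) (hQ' : Q'.PosSemidef)
    (hne : (S P Q).Nonempty) (hne' : (S P' Q').Nonempty)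
    (hx : ∃ x, 0 < qf Q x) :
    sInf (S (P ⊗ₖ P') (Q ⊗ₖ Q')) = sInf (S P Q) * sInf (S P' Q') := by
  set r₁ := sInf (S P Q) with hr₁def
  set r₂ := sInf (S P' Q') with hr₂def
  have hr₁ := sInf_mem_S hP hQ hne
  have hr₂ := sInf_mem_S hP' hQ' hne'
  have hr₁pos : 0 < r₁ := sInf_S_pos hP hQ hne hx
  have hmem : r₁ * r₂ ∈ S (P ⊗ₖ P') (Q ⊗ₖ Q') := by
    refine ⟨mul_nonneg hr₁.1 hr₂.1, ?_⟩
    have hdecomp : (r₁ * r₂) • (P ⊗ₖ P') - Q ⊗ₖ Q'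
        = (r₁ • P - Q) ⊗ₖ (r₂ • P') + Q ⊗ₖ (r₂ • P' - Q') := by
      ext ⟨i, j⟩ ⟨k, l⟩
      simp only [Matrix.sub_apply, Matrix.add_apply, Matrix.smul_apply, kroneckerMap_apply,
        Matrix.sub_apply, smul_eq_mul, Complex.real_smul, Complex.ofReal_mul]
      ring
    rw [hdecomp]
    exact (psdKron hr₁.2 (psdRsmul hP' hr₂.1)).add (psdKron hQ hr₂.2)
  refine le_antisymm (csInf_le (S_bddBelow _ _) hmem) (le_csInf ⟨_, hmem⟩ fun t ht => ?_)
  have htq : ∀ x y, qf Q x * qf Q' y ≤ t * (qf P x * qf P' y) := by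
    intro x y
    have h := (feasible_iff (psdKron hP hP').isHermitian
      (psdKron hQ hQ').isHermitian t).mp ht.2 (vecKron x y)
    rwa [qf_kron hQ.isHermitian hQ'.isHermitian, qf_kron hP.isHermitian hP'.isHermitian] at h
  have hdiv : t / r₁ ∈ S P' Q' := by
    refine (mem_S_iff hP'.isHermitian hQ'.isHermitian _).mpr
      ⟨div_nonneg ht.1 hr₁pos.le, fun y => ?_⟩
    by_contra hcon
    push_neg at hcon
    have hP'y : 0 ≤ qf P' y := hP'.re_dotProduct_nonneg y
    have hQ'y : 0 < qf Q' y :=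
      lt_of_le_of_lt (mul_nonneg (div_nonneg ht.1 hr₁pos.le) hP'y) hcon
    set c := t * qf P' y / qf Q' y with hcdef
    have hcr : c < r₁ := by
      rw [hcdef, div_lt_iff₀ hQ'y]
      have h := mul_lt_mul_of_pos_left hcon hr₁pos
      have heq : r₁ * (t / r₁ * qf P' y) = t * qf P' y := by field_simp
      linarith
    have hc0 : 0 ≤ c := div_nonneg (mul_nonneg ht.1 hP'y) hQ'y.le
    set s := (c + r₁) / 2 with hsdef
    have hcs : c < s := by rw [hsdef]; linarith
    have hsr : s < r₁ := by rw [hsdef]; linarith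
    have hs0 : 0 ≤ s := by rw [hsdef]; linarith
    have hsnot : s ∉ S P Q := fun hsS =>
      absurd (csInf_le (S_bddBelow _ _) hsS) (not_le.mpr hsr)
    rw [mem_S_iff hP.isHermitian hQ.isHermitian] at hsnot
    push_neg at hsnot
    obtain ⟨x, hxlt⟩ := hsnot hs0
    have hPx : 0 ≤ qf P x := hP.re_dotProduct_nonneg x
    have hceq : c * qf Q' y = t * qf P' y := div_mul_cancel₀ _ hQ'y.ne'
    have h1 : t * (qf P x * qf P' y) ≤ s * qf P x * qf Q' y := by
      have hmul : c * qf Q' y ≤ s * qf Q' y := mul_le_mul_of_nonneg_right hcs.le hQ'y.le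
      calc t * (qf P x * qf P' y) = qf P x * (c * qf Q' y) := by rw [hceq]; ring
        _ ≤ qf P x * (s * qf Q' y) := mul_le_mul_of_nonneg_left hmul hPx
        _ = s * qf P x * qf Q' y := by ring
    have h2 : s * qf P x * qf Q' y < qf Q x * qf Q' y :=
      mul_lt_mul_of_pos_right hxlt hQ'y
    have h3 := htq x y
    linarith
  have hle : r₂ ≤ t / r₁ := csInf_le (S_bddBelow _ _) hdiv
  calc r₁ * r₂ ≤ r₁ * (t / r₁) := mul_le_mul_of_nonneg_left hle hr₁pos.le
    _ = t := by field_simp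

end MaxRelAux

namespace MaxRelAux

variable {ι κ : Type*} [Fintype ι] [DecidableEq ι] [Fintype κ] [DecidableEq κ]

lemma choi_trace (Φ : Matrix ι ι ℂ →ₗ[ℂ] Matrix κ κ ℂ) (hΦ : IsTP Φ) :
    (choi Φ).trace = (Fintype.card ι : ℂ) := by
  rw [Matrix.trace]
  simp only [Matrix.diag, choi, of_apply]
  rw [Fintype.sum_prod_type]
  have hone : ∀ i : ι, ∑ k : κ, Φ (single i i 1) k k = 1 := by
    intro i
    have h := hΦ (single i i 1)
    rw [Matrix.trace] at h
    simp only [Matrix.diag] at h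
    rw [h, Matrix.trace]
    simp [single, Matrix.diag, Finset.sum_ite_eq]
  simp only [hone]
  simp

lemma qf_single {n : Type*} [Fintype n] [DecidableEq n] (A : Matrix n n ℂ) (i : n) :
    qf A (Pi.single i (1:ℂ)) = (A i i).re := by
  unfold qf qC
  rw [mulVec_single]
  have hst : star (Pi.single i (1:ℂ)) = (Pi.single i (1:ℂ) : n → ℂ) := by
    ext j
    by_cases h : j = i <;> simp [h, Pi.single_apply]
  rw [hst, single_dotProduct]
  simp

lemma exists_qf_pos [Nonempty ι] (Φ : Matrix ι ι ℂ →ₗ[ℂ] Matrix κ κ ℂ) (hΦ : IsTP Φ) :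
    ∃ x, 0 < qf (choi Φ) x := by
  by_contra hcon
  push_neg at hcon
  have htr : ((choi Φ).trace).re = (Fintype.card ι : ℝ) := by
    rw [choi_trace Φ hΦ]; simp
  have hsum : ((choi Φ).trace).re = ∑ p : ι × κ, ((choi Φ) p p).re := by
    rw [Matrix.trace]; simp [Matrix.diag, Complex.re_sum]
  have hle : ∑ p : ι × κ, ((choi Φ) p p).re ≤ 0 := by
    apply Finset.sum_nonpos
    intro p _
    rw [← qf_single]
    exact hcon _
  have hpos : (0:ℝ) < (Fintype.card ι : ℝ) := by
    exact_mod_cast Fintype.card_pos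
  linarith

lemma stdBasisMatrix_kron {ι' : Type*} [DecidableEq ι'] (a a' : ι) (b b' : ι') :
    single (a, b) (a', b') (1 : ℂ)
      = single a a' 1 ⊗ₖ single b b' 1 := by
  ext ⟨i, j⟩ ⟨k, l⟩
  simp only [single, of_apply, kroneckerMap_apply, Prod.mk.injEq]
  by_cases h1 : a = i <;> by_cases h2 : b = j <;> by_cases h3 : a' = k <;>
    by_cases h4 : b' = l <;> simp [h1, h2, h3, h4]

lemma choi_tensor {A0 A1 B0 B1 : Type*}
    [Fintype A0] [DecidableEq A0] [Fintype A1] [DecidableEq A1]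
    [Fintype B0] [DecidableEq B0] [Fintype B1] [DecidableEq B1]
    (N : Matrix A0 A0 ℂ →ₗ[ℂ] Matrix A1 A1 ℂ) (M : Matrix B0 B0 ℂ →ₗ[ℂ] Matrix B1 B1 ℂ)
    (NM : Matrix (A0 × B0) (A0 × B0) ℂ →ₗ[ℂ] Matrix (A1 × B1) (A1 × B1) ℂ)
    (hNM : ∀ (X : Matrix A0 A0 ℂ) (Y : Matrix B0 B0 ℂ), NM (X ⊗ₖ Y) = (N X) ⊗ₖ (M Y)) :
    choi NM = (choi N ⊗ₖ choi M).submatrix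
      (Equiv.prodProdProdComm A0 B0 A1 B1) (Equiv.prodProdProdComm A0 B0 A1 B1) := by
  ext ⟨⟨a, b⟩, ⟨c, d⟩⟩ ⟨⟨a', b'⟩, ⟨c', d'⟩⟩
  simp only [choi, of_apply, submatrix_apply, Equiv.prodProdProdComm_apply, kroneckerMap_apply]
  rw [stdBasisMatrix_kron, hNM]
  rfl

end MaxRelAux

open MaxRelAux in
/-- Additivity (multiplicativity of the robustness) of the channel max-relative
entropy under tensor products. -/
theorem maxRelRobust_tensor
    {A0 A1 B0 B1 : Type*}
    [Fintype A0] [DecidableEq A0] [Nonempty A0]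
    [Fintype A1] [DecidableEq A1] [Nonempty A1]
    [Fintype B0] [DecidableEq B0] [Nonempty B0]
    [Fintype B1] [DecidableEq B1] [Nonempty B1]
    (N E : Matrix A0 A0 ℂ →ₗ[ℂ] Matrix A1 A1 ℂ)
    (M F : Matrix B0 B0 ℂ →ₗ[ℂ] Matrix B1 B1 ℂ)
    (hN : IsChannel N) (hE : IsChannel E) (hM : IsChannel M) (hF : IsChannel F)
    (NM : Matrix (A0 × B0) (A0 × B0) ℂ →ₗ[ℂ] Matrix (A1 × B1) (A1 × B1) ℂ)
    (hNM : ∀ (X : Matrix A0 A0 ℂ) (Y : Matrix B0 B0 ℂ), NM (X ⊗ₖ Y) = (N X) ⊗ₖ (M Y))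
    (EF : Matrix (A0 × B0) (A0 × B0) ℂ →ₗ[ℂ] Matrix (A1 × B1) (A1 × B1) ℂ)
    (hEF : ∀ (X : Matrix A0 A0 ℂ) (Y : Matrix B0 B0 ℂ), EF (X ⊗ₖ Y) = (E X) ⊗ₖ (F Y))
    (t₁ t₂ : ℝ) (ht₁ : 0 ≤ t₁) (ht₂ : 0 ≤ t₂)
    (h₁ : (t₁ • choi E - choi N).PosSemidef)
    (h₂ : (t₂ • choi F - choi M).PosSemidef) :
    maxRelRobust NM EF = maxRelRobust N E * maxRelRobust M F := by
  have hJN := hN.1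
  have hJE := hE.1
  have hJM := hM.1
  have hJF := hF.1
  have hne1 : (S (choi E) (choi N)).Nonempty := ⟨t₁, ht₁, h₁⟩
  have hne2 : (S (choi F) (choi M)).Nonempty := ⟨t₂, ht₂, h₂⟩
  have hx : ∃ x, 0 < qf (choi N) x := exists_qf_pos N hN.2
  have hsetEq : {t : ℝ | 0 ≤ t ∧ (t • choi EF - choi NM).PosSemidef}
      = S (choi E ⊗ₖ choi F) (choi N ⊗ₖ choi M) := by
    ext t
    simp only [Set.mem_setOf_eq, S]
    refine and_congr_right fun _ => ?_
    rw [choi_tensor E F EF hEF, choi_tensor N M NM hNM]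
    have hsub : t • (choi E ⊗ₖ choi F).submatrix
          (Equiv.prodProdProdComm A0 B0 A1 B1) (Equiv.prodProdProdComm A0 B0 A1 B1)
        - (choi N ⊗ₖ choi M).submatrix
          (Equiv.prodProdProdComm A0 B0 A1 B1) (Equiv.prodProdProdComm A0 B0 A1 B1)
        = (t • (choi E ⊗ₖ choi F) - choi N ⊗ₖ choi M).submatrix
          (Equiv.prodProdProdComm A0 B0 A1 B1) (Equiv.prodProdProdComm A0 B0 A1 B1) := by
      ext p q
      simp
    rw [hsub, Matrix.posSemidef_submatrix_equiv]
  rw [maxRelRobust, hsetEq]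
  exact core hJE hJN hJF hJM hne1 hne2 hx


end
end

section
/- Let R0, R1, A0, A1, B0, B1 be nonempty finite index types and let Θ : (Matrix A0 A0 ℂ →ₗ Matrix A1 A1 ℂ) →ₗ (Matrix B0 B0 ℂ →ₗ Matrix B1 B1 ℂ) be a linear supermap satisfying the MISC condition Δ_B ∘ Θ ∘ Δ_A = Θ ∘ Δ_A, where Δ_A[N] := 𝒟 ∘ N ∘ 𝒟 (with 𝒟 the dephasing on the corresponding index type) and similarly for Δ_B. Let id_R ⊗ Θ denote the induced linear map from (Matrix (R0×A0) (R0×A0) ℂ →ₗ Matrix (R1×A1) (R1×A1) ℂ) to (Matrix (R0×B0) (R0×B0) ℂ →ₗ Matrix (R1×B1) (R1×B1) ℂ), obtained by transporting id ⊗ Θ on Hom(Matrix R0, Matrix R1) ⊗ Hom(Matrix A0, Matrix A1) through the canonical linear equivalences Matrix (ι×κ) (ι×κ) ℂ ≃ Matrix ι ι ℂ ⊗ Matrix κ κ ℂ (Kronecker) and the hom-tensor-hom equivalence for finite-dimensional spaces. Then for every linear map N : Matrix (R0×A0) (R0×A0) ℂ →ₗ Matrix (R1×A1) (R1×A1) ℂ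 that is classical, i.e. 𝒟_{R1×A1} ∘ N ∘ 𝒟_{R0×A0} = N, the output (id_R ⊗ Θ)[N] is classical: 𝒟_{R1×B1} ∘ (id_R ⊗ Θ)[N] ∘ 𝒟_{R0×B0} = (id_R ⊗ Θ)[N]. (Maximally incoherent superchannels are completely free.) -/
open Matrix Kronecker ComplexOrder

noncomputable section

variable {R0 R1 A0 A1 B0 B1 : Type*}

/-- Embedding `ρ ↦ E_{r0 r0'} ⊗ₖ ρ` of an `A0`-matrix into an `(R0 × A0)`-matrix. -/
def embedL [DecidableEq R0] (r0 r0' : R0) :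
    Matrix A0 A0 ℂ →ₗ[ℂ] Matrix (R0 × A0) (R0 × A0) ℂ where
  toFun ρ := Matrix.of fun p q => if p.1 = r0 ∧ q.1 = r0' then ρ p.2 q.2 else 0
  map_add' X Y := by
    ext p q
    by_cases h : p.1 = r0 ∧ q.1 = r0' <;> simp [h]
  map_smul' c X := by
    ext p q
    by_cases h : p.1 = r0 ∧ q.1 = r0' <;> simp [h]

/-- Slice of an `(R0 × B0)`-matrix at the `R0`-indices `(r0, r0')`. -/
def sliceL (r0 r0' : R0) :
    Matrix (R0 × B0) (R0 × B0) ℂ →ₗ[ℂ] Matrix B0 B0 ℂ where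
  toFun X := Matrix.of fun b b' => X (r0, b) (r0', b')
  map_add' X Y := by ext b b'; simp
  map_smul' c X := by ext b b'; simp

/-- Component maps of a bipartite map `N` relative to the canonical basis of the
`R`-part: `(component N r0 r0' r1 r1') ρ = (a, a') ↦ N (E_{r0 r0'} ⊗ₖ ρ) (r1,a) (r1',a')`. -/
def component [DecidableEq R0]
    (N : Matrix (R0 × A0) (R0 × A0) ℂ →ₗ[ℂ] Matrix (R1 × A1) (R1 × A1) ℂ)
    (r0 r0' : R0) (r1 r1' : R1) :
    Matrix A0 A0 ℂ →ₗ[ℂ] Matrix A1 A1 ℂ where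
  toFun ρ := Matrix.of fun a a' => N (embedL r0 r0' ρ) (r1, a) (r1', a')
  map_add' X Y := by ext a a'; simp
  map_smul' c X := by ext a a'; simp

/-- The induced action `(id_R ⊗ Θ)[N]` of a supermap `Θ` on the `A`-part of a
bipartite map `N`, obtained by transporting `id ⊗ Θ` through the canonical
tensor/hom equivalences (given here by its concrete component formula). -/
def idTensorSuper [Fintype R0] [DecidableEq R0]
    (Θ : (Matrix A0 A0 ℂ →ₗ[ℂ] Matrix A1 A1 ℂ) →ₗ[ℂ] (Matrix B0 B0 ℂ →ₗ[ℂ] Matrix B1 B1 ℂ))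
    (N : Matrix (R0 × A0) (R0 × A0) ℂ →ₗ[ℂ] Matrix (R1 × A1) (R1 × A1) ℂ) :
    Matrix (R0 × B0) (R0 × B0) ℂ →ₗ[ℂ] Matrix (R1 × B1) (R1 × B1) ℂ where
  toFun X := Matrix.of fun p q =>
    ∑ r0 : R0, ∑ r0' : R0, (Θ (component N r0 r0' p.1 q.1)) (sliceL r0 r0' X) p.2 q.2
  map_add' X Y := by
    ext p q
    simp [map_add, Finset.sum_add_distrib]
  map_smul' c X := by
    ext p q
    simp [_root_.map_smul, Finset.mul_sum]

lemma deph_apply {ι : Type*} [DecidableEq ι] (M : Matrix ι ι ℂ) (i j : ι) :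
    deph M i j = if i = j then M i j else 0 := rfl

lemma component_apply [DecidableEq R0]
    (N : Matrix (R0 × A0) (R0 × A0) ℂ →ₗ[ℂ] Matrix (R1 × A1) (R1 × A1) ℂ)
    (r0 r0' : R0) (r1 r1' : R1) (ρ : Matrix A0 A0 ℂ) (a a' : A1) :
    component N r0 r0' r1 r1' ρ a a' = N (embedL r0 r0' ρ) (r1, a) (r1', a') := rfl

lemma deph_embed_ne [DecidableEq R0] [DecidableEq A0] (r0 r0' : R0) (h : r0 ≠ r0')
    (ρ : Matrix A0 A0 ℂ) : deph (embedL (A0 := A0) r0 r0' ρ) = 0 := by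
  ext p q
  simp only [deph_apply, embedL, LinearMap.coe_mk, AddHom.coe_mk, Matrix.of_apply,
    Matrix.zero_apply]
  split_ifs with h1 h2
  · exact absurd (h2.1.symm.trans (h1 ▸ h2.2)) h
  · rfl
  · rfl

lemma deph_embed_eq [DecidableEq R0] [DecidableEq A0] (r0 : R0)
    (ρ : Matrix A0 A0 ℂ) :
    deph (embedL (A0 := A0) r0 r0 ρ) = embedL r0 r0 (deph ρ) := by
  ext p q
  simp only [deph_apply, embedL, LinearMap.coe_mk, AddHom.coe_mk, Matrix.of_apply]
  by_cases h : p = q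
  · subst h
    by_cases h1 : p.1 = r0 <;> simp [h1]
  · rw [if_neg h]
    by_cases h1 : p.1 = r0 ∧ q.1 = r0
    · rw [if_pos h1, if_neg]
      intro h2
      exact h (Prod.ext (h1.1.trans h1.2.symm) h2)
    · rw [if_neg h1]

lemma component_ne_left [DecidableEq R0] [DecidableEq R1] [DecidableEq A0] [DecidableEq A1]
    (N : Matrix (R0 × A0) (R0 × A0) ℂ →ₗ[ℂ] Matrix (R1 × A1) (R1 × A1) ℂ)
    (hN : deph ∘ₗ N ∘ₗ deph = N)
    (r0 r0' : R0) (h : r0 ≠ r0') (r1 r1' : R1) :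
    component N r0 r0' r1 r1' = 0 := by
  have hN' : ∀ X, N X = deph (N (deph X)) := fun X => (LinearMap.congr_fun hN X).symm
  ext ρ a a'
  rw [component_apply, hN' (embedL r0 r0' ρ), deph_embed_ne r0 r0' h]
  simp

lemma component_deph [DecidableEq R0] [DecidableEq R1] [DecidableEq A0] [DecidableEq A1]
    (N : Matrix (R0 × A0) (R0 × A0) ℂ →ₗ[ℂ] Matrix (R1 × A1) (R1 × A1) ℂ)
    (hN : deph ∘ₗ N ∘ₗ deph = N)
    (r0 : R0) (r1 : R1) :
    component N r0 r0 r1 r1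
      = deph ∘ₗ component N r0 r0 r1 r1 ∘ₗ deph := by
  have hN' : ∀ X, N X = deph (N (deph X)) := fun X => (LinearMap.congr_fun hN X).symm
  ext ρ a a'
  simp only [LinearMap.comp_apply, deph_apply, component_apply]
  rw [hN' (embedL r0 r0 ρ), deph_embed_eq]
  simp only [deph_apply]
  by_cases h : a = a'
  · subst h; simp
  · rw [if_neg h, if_neg (by simp [Prod.ext_iff, h])]

lemma component_ne_right [DecidableEq R0] [DecidableEq R1] [DecidableEq A0] [DecidableEq A1]
    (N : Matrix (R0 × A0) (R0 × A0) ℂ →ₗ[ℂ] Matrix (R1 × A1) (R1 × A1) ℂ)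
    (hN : deph ∘ₗ N ∘ₗ deph = N)
    (r0 : R0) (r1 r1' : R1) (h : r1 ≠ r1') :
    component N r0 r0 r1 r1' = 0 := by
  have hN' : ∀ X, N X = deph (N (deph X)) := fun X => (LinearMap.congr_fun hN X).symm
  ext ρ a a'
  rw [component_apply, hN' (embedL r0 r0 ρ), deph_embed_eq]
  simp only [deph_apply]
  rw [if_neg (by simp [Prod.ext_iff, h])]
  simp

lemma slice_deph [DecidableEq R0] [DecidableEq B0]
    (r0 : R0) (X : Matrix (R0 × B0) (R0 × B0) ℂ) :
    sliceL (B0 := B0) r0 r0 (deph X) = deph (sliceL r0 r0 X) := by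
  ext b b'
  simp only [sliceL, LinearMap.coe_mk, AddHom.coe_mk, Matrix.of_apply, deph_apply,
    Prod.mk.injEq, true_and]

/-- Maximally incoherent superchannels are completely free: if `Θ` satisfies the
MISC condition then `id_R ⊗ Θ` maps classical bipartite channels to classical ones. -/
theorem idTensor_MISC_classical
    [Fintype R0] [DecidableEq R0] [Nonempty R0]
    [Fintype R1] [DecidableEq R1] [Nonempty R1]
    [Fintype A0] [DecidableEq A0] [Nonempty A0]
    [Fintype A1] [DecidableEq A1] [Nonempty A1]
    [Fintype B0] [DecidableEq B0] [Nonempty B0]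
    [Fintype B1] [DecidableEq B1] [Nonempty B1]
    (Θ : (Matrix A0 A0 ℂ →ₗ[ℂ] Matrix A1 A1 ℂ) →ₗ[ℂ] (Matrix B0 B0 ℂ →ₗ[ℂ] Matrix B1 B1 ℂ))
    (hΘ : ∀ N : Matrix A0 A0 ℂ →ₗ[ℂ] Matrix A1 A1 ℂ,
      deph ∘ₗ (Θ (deph ∘ₗ N ∘ₗ deph)) ∘ₗ deph = Θ (deph ∘ₗ N ∘ₗ deph))
    (N : Matrix (R0 × A0) (R0 × A0) ℂ →ₗ[ℂ] Matrix (R1 × A1) (R1 × A1) ℂ)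
    (hN : deph ∘ₗ N ∘ₗ deph = N) :
    deph ∘ₗ (idTensorSuper Θ N) ∘ₗ deph = idTensorSuper Θ N := by
  have key : ∀ (r0 : R0) (r1 : R1),
      deph ∘ₗ Θ (component N r0 r0 r1 r1) ∘ₗ deph = Θ (component N r0 r0 r1 r1) := by
    intro r0 r1
    have h := hΘ (component N r0 r0 r1 r1)
    rw [← component_deph N hN r0 r1] at h
    exact h
  have key' : ∀ (r0 : R0) (r1 : R1) (S : Matrix B0 B0 ℂ) (b b' : B1),
      Θ (component N r0 r0 r1 r1) S b b'
        = if b = b' then Θ (component N r0 r0 r1 r1) (deph S) b b else 0 := by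
    intro r0 r1 S b b'
    conv_lhs => rw [← key r0 r1]
    simp only [LinearMap.comp_apply, deph_apply]
    by_cases h : b = b' <;> simp [h]
  ext X ⟨r1, b1⟩ ⟨r1', b1'⟩
  simp only [LinearMap.comp_apply, deph_apply]
  have Tapp : ∀ (Y : Matrix (R0 × B0) (R0 × B0) ℂ) (p q : R1 × B1),
      idTensorSuper Θ N Y p q
        = ∑ r0 : R0, ∑ r0' : R0,
            (Θ (component N r0 r0' p.1 q.1)) (sliceL r0 r0' Y) p.2 q.2 := fun _ _ _ => rfl
  rw [Tapp]
  by_cases h : ((r1, b1) : R1 × B1) = (r1', b1')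
  · rw [if_pos h]
    obtain ⟨h1, h2⟩ := Prod.mk.injEq .. ▸ h
    subst h1; subst h2
    rw [Tapp]
    refine Finset.sum_congr rfl fun r0 _ => Finset.sum_congr rfl fun r0' _ => ?_
    by_cases hr : r0 = r0'
    · subst hr
      rw [slice_deph, key' r0 r1 (sliceL r0 r0 X) b1 b1,
        key' r0 r1 (deph (sliceL r0 r0 X)) b1 b1]
      simp [deph_apply]
    · rw [component_ne_left N hN r0 r0' hr]
      simp
  · rw [if_neg h]
    symm
    refine Finset.sum_eq_zero fun r0 _ => Finset.sum_eq_zero fun r0' _ => ?_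
    by_cases hr : r0 = r0'
    · subst hr
      by_cases hr1 : r1 = r1'
      · subst hr1
        have hb : b1 ≠ b1' := fun hb => h (by rw [hb])
        rw [key' r0 r1 (sliceL r0 r0 X) b1 b1', if_neg hb]
      · rw [component_ne_right N hN r0 r1 r1' hr1]
        simp
    · rw [component_ne_left N hN r0 r0' hr]
      simp

end
end

section
/- Let A0, A1, B0, B1 be nonempty finite index types and let Θ : (Matrix A0 A0 ℂ →ₗ Matrix A1 A1 ℂ) →ₗ (Matrix B0 B0 ℂ →ₗ Matrix B1 B1 ℂ) be any linear supermap. Then the Choi matrices of Θ ∘ Δ_A and Δ_B ∘ Θ satisfy 𝐉(Θ ∘ Δ_A) = (𝒟_A ⊗ id_B)(𝐉(Θ)) and 𝐉(Δ_B ∘ Θ) = (id_A ⊗ 𝒟_B)(𝐉(Θ)), where (𝒟_A ⊗ id_B)(M) ((a,b),(a',b')) = if a = a' then M ((a,b),(a',b')) else 0 dephases the first (A0×A1)-factor of the index, and (id_A ⊗ 𝒟_B) dephases the second (B0×B1)-factor. -/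
open Matrix Kronecker ComplexOrder

noncomputable section

variable {A0 A1 B0 B1 : Type*}

/-- The canonical basis maps `E^{ijkl}(ρ) = ρ i j • E_{kl}`. -/
def basisMap [DecidableEq A1] (i j : A0) (k l : A1) :
    Matrix A0 A0 ℂ →ₗ[ℂ] Matrix A1 A1 ℂ where
  toFun ρ := ρ i j • Matrix.single k l 1
  map_add' X Y := by simp [add_smul]
  map_smul' c X := by simp [smul_smul]

/-- Choi matrix of a supermap:
`𝐉(Θ) = Σ_{i,j,k,l} J(E^{ijkl}) ⊗ₖ J(Θ[E^{ijkl}])`. -/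
def superChoi [Fintype A0] [DecidableEq A0] [Fintype A1] [DecidableEq A1]
    [Fintype B0] [DecidableEq B0]
    (Θ : (Matrix A0 A0 ℂ →ₗ[ℂ] Matrix A1 A1 ℂ) → (Matrix B0 B0 ℂ →ₗ[ℂ] Matrix B1 B1 ℂ)) :
    Matrix ((A0 × A1) × (B0 × B1)) ((A0 × A1) × (B0 × B1)) ℂ :=
  ∑ i : A0, ∑ j : A0, ∑ k : A1, ∑ l : A1,
    (choi (basisMap i j k l)) ⊗ₖ (choi (Θ (basisMap i j k l)))

/-- Partial dephasing of the first tensor factor of the index. -/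
def dephFst {α β : Type*} [DecidableEq α] (M : Matrix (α × β) (α × β) ℂ) :
    Matrix (α × β) (α × β) ℂ :=
  Matrix.of fun p q => if p.1 = q.1 then M p q else 0

/-- Partial dephasing of the second tensor factor of the index. -/
def dephSnd {α β : Type*} [DecidableEq β] (M : Matrix (α × β) (α × β) ℂ) :
    Matrix (α × β) (α × β) ℂ :=
  Matrix.of fun p q => if p.2 = q.2 then M p q else 0

lemma choi_basisMap [Fintype A0] [DecidableEq A0] [DecidableEq A1]
    (i j : A0) (k l : A1) (p q : A0 × A1) :
    choi (basisMap i j k l) p q =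
      (if p.1 = i ∧ q.1 = j then 1 else 0) * (if k = p.2 ∧ l = q.2 then 1 else 0) := by
  simp only [choi, basisMap, Matrix.single, Matrix.smul_apply, LinearMap.coe_mk,
    AddHom.coe_mk, Matrix.of_apply, smul_eq_mul, mul_ite, mul_one, mul_zero]


lemma superChoi_apply [Fintype A0] [DecidableEq A0] [Fintype A1] [DecidableEq A1]
    [Fintype B0] [DecidableEq B0]
    (Θ : (Matrix A0 A0 ℂ →ₗ[ℂ] Matrix A1 A1 ℂ) → (Matrix B0 B0 ℂ →ₗ[ℂ] Matrix B1 B1 ℂ))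
    (p q : (A0 × A1) × (B0 × B1)) :
    superChoi Θ p q = choi (Θ (basisMap p.1.1 q.1.1 p.1.2 q.1.2)) p.2 q.2 := by
  simp only [superChoi, Matrix.sum_apply, Matrix.kroneckerMap_apply, choi_basisMap]
  simp [ite_and, Finset.sum_ite_eq, Finset.sum_ite_eq', mul_ite, mul_one, mul_zero]


lemma deph_basisMap_deph [DecidableEq A0] [DecidableEq A1] (i j : A0) (k l : A1) :
    deph ∘ₗ basisMap i j k l ∘ₗ deph =
      if i = j ∧ k = l then basisMap i j k l else 0 := by
  ext ρ a b
  simp only [LinearMap.comp_apply, deph, basisMap, LinearMap.coe_mk, AddHom.coe_mk,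
    Matrix.of_apply, Matrix.smul_apply, Matrix.single, smul_eq_mul, mul_ite,
    mul_one, mul_zero]
  split_ifs <;> simp_all <;> aesop

lemma choi_deph_comp {B0 B1 : Type*} [Fintype B0] [DecidableEq B0] [DecidableEq B1]
    (Φ : Matrix B0 B0 ℂ →ₗ[ℂ] Matrix B1 B1 ℂ) (p q : B0 × B1) :
    choi (deph ∘ₗ Φ ∘ₗ deph) p q =
      if p.1 = q.1 ∧ p.2 = q.2 then choi Φ p q else 0 := by
  have hd : deph (Matrix.single p.1 q.1 (1:ℂ)) =
      if p.1 = q.1 then Matrix.single p.1 q.1 1 else 0 := by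
    ext a b
    simp only [deph, LinearMap.coe_mk, AddHom.coe_mk, Matrix.of_apply,
      Matrix.single]
    split_ifs <;> simp_all <;> aesop
  simp only [choi, Matrix.of_apply, LinearMap.comp_apply, hd]
  by_cases h1 : p.1 = q.1 <;> by_cases h2 : p.2 = q.2 <;>
    simp [h1, h2, deph]

/-- The Choi matrix of `Θ ∘ Δ_A` is the partial `A`-dephasing of `𝐉(Θ)`, and the
Choi matrix of `Δ_B ∘ Θ` is the partial `B`-dephasing of `𝐉(Θ)`. -/
theorem superChoi_deph
    [Fintype A0] [DecidableEq A0] [Nonempty A0]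
    [Fintype A1] [DecidableEq A1] [Nonempty A1]
    [Fintype B0] [DecidableEq B0] [Nonempty B0]
    [Fintype B1] [DecidableEq B1] [Nonempty B1]
    (Θ : (Matrix A0 A0 ℂ →ₗ[ℂ] Matrix A1 A1 ℂ) →ₗ[ℂ] (Matrix B0 B0 ℂ →ₗ[ℂ] Matrix B1 B1 ℂ)) :
    superChoi (fun N => Θ (deph ∘ₗ N ∘ₗ deph)) = dephFst (superChoi fun N => Θ N) ∧
    superChoi (fun N => deph ∘ₗ (Θ N) ∘ₗ deph) = dephSnd (superChoi fun N => Θ N) := by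
  constructor
  · ext p q
    rw [superChoi_apply]
    simp only [dephFst, Matrix.of_apply, superChoi_apply, deph_basisMap_deph]
    by_cases h : p.1 = q.1
    · have h1 : p.1.1 = q.1.1 := by rw [h]
      have h2 : p.1.2 = q.1.2 := by rw [h]
      simp [h, h1, h2]
    · have hn : ¬ (p.1.1 = q.1.1 ∧ p.1.2 = q.1.2) := fun ⟨a, b⟩ => h (Prod.ext a b)
      simp [h, hn, choi]
  · ext p q
    rw [superChoi_apply, choi_deph_comp]
    simp only [dephSnd, Matrix.of_apply, superChoi_apply]
    by_cases h : p.2 = q.2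
    · have h1 : p.2.1 = q.2.1 := by rw [h]
      have h2 : p.2.2 = q.2.2 := by rw [h]
      simp [h, h1, h2]
    · have hn : ¬ (p.2.1 = q.2.1 ∧ p.2.2 = q.2.2) := fun ⟨a, b⟩ => h (Prod.ext a b)
      simp [h, hn]


end
end

section
/- Let A0, A1, B0, B1, E be nonempty finite index types, let F : Matrix B0 B0 ℂ →ₗ Matrix (A0×E) (A0×E) ℂ and G : Matrix (A1×E) (A1×E) ℂ →ₗ Matrix B1 B1 ℂ be quantum channels, and let Θ[N] := G ∘ (N ⊗ id_E) ∘ F be the associated superchannel in realization form. Assume Θ is MISC, i.e. Θ[M] is a classical channel for every classical channel M from Matrix A0 A0 ℂ to Matrix A1 A1 ℂ. Define the log-robustness base r_C(N) := sInf {t : ℝ | 0 ≤ t ∧ ∃ E₀, E₀ is a classical channel ∧ (t • J(E₀) − J(N)).PosSemidef}. Then for every quantum channel N from Matrix A0 A0 ℂ to Matrix A1 A1 ℂ, r_C(Θ[N]) ≤ r_C(N). (The log-robustness of coherence LR_C = log₂ r_C is a monotone under MISC superchannels.) -/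
open Matrix Kronecker ComplexOrder

noncomputable section

/-- Classical map: invariant under dephasing of input and output. -/
def IsClassical {ι κ : Type*} [DecidableEq ι] [DecidableEq κ]
    (Φ : Matrix ι ι ℂ →ₗ[ℂ] Matrix κ κ ℂ) : Prop := deph ∘ₗ Φ ∘ₗ deph = Φ

/-- Coherence robustness `r_C(N)`: robustness relative to classical channels. -/
def coherenceRobust {ι κ : Type*} [Fintype ι] [DecidableEq ι] [Fintype κ] [DecidableEq κ]
    (N : Matrix ι ι ℂ →ₗ[ℂ] Matrix κ κ ℂ) : ℝ :=
  sInf {t : ℝ | 0 ≤ t ∧ ∃ E₀ : Matrix ι ι ℂ →ₗ[ℂ] Matrix κ κ ℂ,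
    IsChannel E₀ ∧ IsClassical E₀ ∧ (t • choi E₀ - choi N).PosSemidef}


section Aux

set_option linter.unusedSectionVars false

variable {ι κ μ : Type*} [Fintype ι] [DecidableEq ι] [Fintype κ] [DecidableEq κ]
  [Fintype μ] [DecidableEq μ]

lemma map_apply_eq (Φ : Matrix ι ι ℂ →ₗ[ℂ] Matrix κ κ ℂ) (X : Matrix ι ι ℂ) (k l : κ) :
    Φ X k l = ∑ i, ∑ j, X i j * Φ (Matrix.single i j 1) k l := by
  conv_lhs => rw [matrix_eq_sum_single X]
  rw [map_sum]
  simp only [Matrix.sum_apply]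
  refine Finset.sum_congr rfl fun i _ => ?_
  rw [map_sum]
  simp only [Matrix.sum_apply]
  refine Finset.sum_congr rfl fun j _ => ?_
  have h1 : Matrix.single i j (X i j) = X i j • Matrix.single i j (1 : ℂ) := by
    rw [Matrix.smul_single, smul_eq_mul, mul_one]
  rw [h1, LinearMap.map_smul]
  simp

lemma sandwich_std (A : Matrix ι κ ℂ) (i j : ι) (k l : κ) :
    (Aᴴ * Matrix.single i j (1 : ℂ) * A) k l = (starRingEnd ℂ) (A i k) * A j l := by
  simp only [Matrix.mul_apply, Matrix.conjTranspose_apply, Matrix.single,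
    Matrix.of_apply, Finset.sum_mul, Finset.mul_sum]
  rw [Finset.sum_comm]
  rw [Finset.sum_eq_single i]
  · rw [Finset.sum_eq_single j] <;> aesop
  · intro b _ hb
    rw [Finset.sum_eq_single j] <;> aesop
  · aesop

lemma sandwich_apply (A : Matrix ι κ ℂ) (X : Matrix ι ι ℂ) (k l : κ) :
    (Aᴴ * X * A) k l = ∑ i, ∑ j, (starRingEnd ℂ) (A i k) * X i j * A j l := by
  simp only [Matrix.mul_apply, Matrix.conjTranspose_apply, Finset.sum_mul, starRingEnd_apply]
  rw [Finset.sum_comm]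

lemma exists_kraus {Φ : Matrix ι ι ℂ →ₗ[ℂ] Matrix κ κ ℂ} (h : IsCP Φ) :
    ∃ K : (ι × κ) → Matrix ι κ ℂ, ∀ X, Φ X = ∑ m, (K m)ᴴ * X * K m := by
  obtain ⟨B, hB⟩ : ∃ B, choi Φ = Bᴴ * B := by
    open scoped MatrixOrder in exact CStarAlgebra.nonneg_iff_eq_star_mul_self.mp h.nonneg
  refine ⟨fun m => Matrix.of fun i k => B m (i, k), fun X => ?_⟩
  ext k l
  rw [map_apply_eq]
  have hJ : ∀ i j, Φ (Matrix.single i j 1) k l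
      = ∑ m, (starRingEnd ℂ) (B m (i, k)) * B m (j, l) := by
    intro i j
    have h2 := congrFun (congrFun hB ((i, k) : ι × κ)) ((j, l) : ι × κ)
    simp only [choi, Matrix.of_apply, Matrix.mul_apply, Matrix.conjTranspose_apply] at h2
    simpa using h2
  simp only [hJ, Matrix.sum_apply, sandwich_apply, Matrix.of_apply]
  conv_rhs => rw [Finset.sum_comm]
  refine Finset.sum_congr rfl fun i _ => ?_
  conv_rhs => rw [Finset.sum_comm]
  refine Finset.sum_congr rfl fun j _ => ?_
  rw [Finset.mul_sum]
  refine Finset.sum_congr rfl fun m _ => ?_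
  ring

lemma isCP_of_kraus {σ : Type*} [Fintype σ] {Φ : Matrix ι ι ℂ →ₗ[ℂ] Matrix κ κ ℂ}
    (K : σ → Matrix ι κ ℂ) (h : ∀ X, Φ X = ∑ m, (K m)ᴴ * X * K m) : IsCP Φ := by
  have h1 : choi Φ = (Matrix.of fun (m : σ) (p : ι × κ) => K m p.1 p.2)ᴴ *
      (Matrix.of fun (m : σ) (p : ι × κ) => K m p.1 p.2) := by
    ext p q
    rw [Matrix.mul_apply]
    simp only [choi, Matrix.of_apply, h, Matrix.sum_apply, sandwich_std,
      Matrix.conjTranspose_apply]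
    rfl
  rw [IsCP, h1]
  exact Matrix.posSemidef_conjTranspose_mul_self _

lemma isCP_comp {Φ : Matrix ι ι ℂ →ₗ[ℂ] Matrix κ κ ℂ} {Ψ : Matrix κ κ ℂ →ₗ[ℂ] Matrix μ μ ℂ}
    (hΦ : IsCP Φ) (hΨ : IsCP Ψ) : IsCP (Ψ ∘ₗ Φ) := by
  obtain ⟨K, hK⟩ := exists_kraus hΦ
  obtain ⟨L, hL⟩ := exists_kraus hΨ
  refine isCP_of_kraus (σ := (κ × μ) × (ι × κ)) (fun p => K p.2 * L p.1) fun X => ?_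
  simp only [LinearMap.comp_apply, hK, hL]
  conv_rhs => rw [Fintype.sum_prod_type]
  refine Finset.sum_congr rfl fun n _ => ?_
  simp only [Finset.mul_sum, Finset.sum_mul, Matrix.conjTranspose_mul, Matrix.mul_assoc,
    Matrix.sum_mul, Matrix.mul_sum]

lemma smul_one_sub_psd {A : Matrix ι ι ℂ} (hA : A.PosSemidef) {c : ℝ}
    (hc : ∀ i, hA.1.eigenvalues i ≤ c) : ((c : ℂ) • 1 - A).PosSemidef := by
  set U : Matrix ι ι ℂ := (hA.1.eigenvectorUnitary : Matrix ι ι ℂ) with hUdef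
  have hU : U * star U = 1 := Matrix.mem_unitaryGroup_iff.mp hA.1.eigenvectorUnitary.2
  have key : (c : ℂ) • 1 - A
      = U * (Matrix.diagonal fun i => (c : ℂ) - (hA.1.eigenvalues i : ℂ)) * star U := by
    have h1 : (Matrix.diagonal fun i => (c : ℂ) - (hA.1.eigenvalues i : ℂ))
        = (c : ℂ) • 1 - Matrix.diagonal (RCLike.ofReal ∘ hA.1.eigenvalues) := by
      rw [Matrix.smul_one_eq_diagonal, ← Matrix.diagonal_sub]
      rfl
    rw [h1, Matrix.mul_sub, Matrix.sub_mul]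
    conv_lhs => rw [hA.1.spectral_theorem, Unitary.conjStarAlgAut_apply]
    congr 1
    rw [Matrix.mul_smul, mul_one, Matrix.smul_mul, hU]
  rw [key]
  have h2 : (Matrix.diagonal fun i => (c : ℂ) - (hA.1.eigenvalues i : ℂ)).PosSemidef := by
    refine Matrix.posSemidef_diagonal_iff.mpr fun i => ?_
    rw [← Complex.ofReal_sub]
    exact Complex.zero_le_real.mpr (by linarith [hc i])
  exact h2.mul_mul_conjTranspose_same U

/-- The uniform (completely depolarizing to the maximally mixed state) channel. -/
def unifChan (ι κ : Type*) [Fintype ι] [DecidableEq ι] [Fintype κ] [DecidableEq κ] :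
    Matrix ι ι ℂ →ₗ[ℂ] Matrix κ κ ℂ where
  toFun X := ((Fintype.card κ : ℂ)⁻¹ * X.trace) • (1 : Matrix κ κ ℂ)
  map_add' X Y := by simp [Matrix.trace_add, mul_add, add_smul]
  map_smul' c X := by
    simp only [Matrix.trace_smul, smul_eq_mul, RingHom.id_apply, smul_smul]
    ring_nf

lemma choi_unifChan : choi (unifChan ι κ) = (Fintype.card κ : ℂ)⁻¹ • 1 := by
  ext p q
  have htr : (Matrix.single p.1 q.1 (1 : ℂ)).trace = if p.1 = q.1 then 1 else 0 := by
    by_cases h : p.1 = q.1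
    · rw [if_pos h, ← h]
      simp [Matrix.trace, Matrix.diag, Matrix.single, Finset.sum_ite_eq]
    · simp only [Matrix.trace, Matrix.diag, Matrix.single, Matrix.of_apply, if_neg h]
      refine Finset.sum_eq_zero fun d _ => ?_
      aesop
  simp only [choi, Matrix.of_apply, unifChan, LinearMap.coe_mk, AddHom.coe_mk, htr,
    Matrix.smul_apply, Matrix.one_apply, Matrix.smul_apply]
  by_cases h1 : p.1 = q.1 <;> by_cases h2 : p.2 = q.2 <;>
    simp [h1, h2, Prod.ext_iff, smul_eq_mul]

lemma unifChan_channel [Nonempty κ] : IsChannel (unifChan ι κ) := by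
  have hn : (Fintype.card κ : ℂ) ≠ 0 := by
    exact_mod_cast Nat.cast_ne_zero.mpr Fintype.card_ne_zero
  constructor
  · rw [IsCP, choi_unifChan, Matrix.smul_one_eq_diagonal]
    refine Matrix.posSemidef_diagonal_iff.mpr fun i => ?_
    have h2 : ((Fintype.card κ : ℂ))⁻¹ = (((Fintype.card κ : ℝ)⁻¹ : ℝ) : ℂ) := by
      push_cast
      ring
    rw [h2]
    exact Complex.zero_le_real.mpr (inv_nonneg.mpr (Nat.cast_nonneg _))
  · intro X
    simp only [unifChan, LinearMap.coe_mk, AddHom.coe_mk, Matrix.trace_smul, Matrix.trace_one,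
      smul_eq_mul]
    field_simp

lemma unifChan_classical : IsClassical (unifChan ι κ) := by
  refine LinearMap.ext fun X => ?_
  have htr : ((deph X : Matrix ι ι ℂ)).trace = X.trace := by
    simp [deph, Matrix.trace, Matrix.diag]
  ext i j
  simp only [LinearMap.comp_apply, unifChan, LinearMap.coe_mk, AddHom.coe_mk, htr]
  by_cases h : i = j <;> simp [deph, h, Matrix.one_apply]

lemma choi_smulL (c : ℂ) (Φ : Matrix ι ι ℂ →ₗ[ℂ] Matrix κ κ ℂ) :
    choi (c • Φ) = c • choi Φ := by
  ext p q; simp [choi]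

lemma choi_subL (Φ Ψ : Matrix ι ι ℂ →ₗ[ℂ] Matrix κ κ ℂ) :
    choi (Φ - Ψ) = choi Φ - choi Ψ := by
  ext p q; simp [choi]

lemma real_smul_mat {a b : Type*} (t : ℝ) (M : Matrix a b ℂ) : t • M = (t : ℂ) • M := by
  ext i j
  simp [Complex.real_smul]

end Aux

section Tensor

set_option linter.unusedSectionVars false

variable {A0 A1 E : Type*} [Fintype A0] [DecidableEq A0] [Fintype A1] [DecidableEq A1]
  [Fintype E] [DecidableEq E]

lemma std_kron (a a' : A0) (e e' : E) :
    Matrix.single ((a, e) : A0 × E) ((a', e') : A0 × E) (1 : ℂ)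
      = Matrix.single a a' (1 : ℂ) ⊗ₖ Matrix.single e e' (1 : ℂ) := by
  ext ⟨b, f⟩ ⟨b', f'⟩
  simp only [Matrix.single, Matrix.of_apply, Matrix.kroneckerMap_apply, Prod.mk.injEq,
    Prod.ext_iff]
  by_cases h1 : a = b <;> by_cases h2 : e = f <;> by_cases h3 : a' = b' <;> by_cases h4 : e' = f' <;>
    simp [h1, h2, h3, h4]

/-- Isometry-like matrix implementing `M ↦ M ⊗ id` on Choi matrices by congruence. -/
def kmat (A0 A1 E : Type*) [DecidableEq A0] [DecidableEq A1] [DecidableEq E] :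
    Matrix ((A0 × E) × (A1 × E)) (A0 × A1) ℂ :=
  Matrix.of fun p q => if p.1.2 = p.2.2 ∧ q = (p.1.1, p.2.1) then 1 else 0

lemma congr_entry (C : Matrix (A0 × A1) (A0 × A1) ℂ) (p q : (A0 × E) × (A1 × E)) :
    (kmat A0 A1 E * C * (kmat A0 A1 E)ᴴ) p q
      = if p.1.2 = p.2.2 ∧ q.1.2 = q.2.2 then C (p.1.1, p.2.1) (q.1.1, q.2.1) else 0 := by
  have hTC : ∀ v, (kmat A0 A1 E * C) p v
      = if p.1.2 = p.2.2 then C (p.1.1, p.2.1) v else 0 := by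
    intro v
    simp only [Matrix.mul_apply, kmat, Matrix.of_apply, ite_mul, one_mul, zero_mul]
    by_cases hp : p.1.2 = p.2.2
    · simp [hp, Finset.sum_ite_eq]
    · simp [hp]
  rw [Matrix.mul_apply]
  simp only [hTC, Matrix.conjTranspose_apply, ite_mul, zero_mul]
  by_cases hp : p.1.2 = p.2.2
  · simp only [if_pos hp, kmat, Matrix.of_apply, apply_ite (star : ℂ → ℂ), star_one, star_zero,
      mul_ite, mul_one, mul_zero]
    by_cases hq : q.1.2 = q.2.2
    · simp [hp, hq, Finset.sum_ite_eq']
    · simp [hq]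
  · simp [hp]

lemma choi_tensorExt (tE : Matrix (A0 × E) (A0 × E) ℂ →ₗ[ℂ] Matrix (A1 × E) (A1 × E) ℂ)
    (M : Matrix A0 A0 ℂ →ₗ[ℂ] Matrix A1 A1 ℂ)
    (h : ∀ X Y, tE (X ⊗ₖ Y) = (M X) ⊗ₖ Y) :
    choi tE = kmat A0 A1 E * choi M * (kmat A0 A1 E)ᴴ := by
  ext p q
  obtain ⟨⟨a, e⟩, ⟨b, f⟩⟩ := p
  obtain ⟨⟨a', e'⟩, ⟨b', f'⟩⟩ := q
  rw [congr_entry]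
  simp only [choi, Matrix.of_apply, std_kron, h, Matrix.kroneckerMap_apply]
  simp only [Matrix.single, Matrix.of_apply]
  by_cases h1 : e = f <;> by_cases h2 : e' = f' <;>
    simp [h1, h2, eq_comm]

end Tensor

/-- The (log-)robustness of coherence is a monotone under MISC superchannels
given in realization form `Θ[N] = G ∘ (N ⊗ id_E) ∘ F`. -/
theorem coherenceRobust_MISC_monotone
    {A0 A1 B0 B1 E : Type*}
    [Fintype A0] [DecidableEq A0] [Nonempty A0]
    [Fintype A1] [DecidableEq A1] [Nonempty A1]
    [Fintype B0] [DecidableEq B0] [Nonempty B0]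
    [Fintype B1] [DecidableEq B1] [Nonempty B1]
    [Fintype E] [DecidableEq E] [Nonempty E]
    (F : Matrix B0 B0 ℂ →ₗ[ℂ] Matrix (A0 × E) (A0 × E) ℂ)
    (G : Matrix (A1 × E) (A1 × E) ℂ →ₗ[ℂ] Matrix B1 B1 ℂ)
    (hF : IsChannel F) (hG : IsChannel G)
    (tensorExt : (Matrix A0 A0 ℂ →ₗ[ℂ] Matrix A1 A1 ℂ) →
      (Matrix (A0 × E) (A0 × E) ℂ →ₗ[ℂ] Matrix (A1 × E) (A1 × E) ℂ))
    (hext : ∀ (N : Matrix A0 A0 ℂ →ₗ[ℂ] Matrix A1 A1 ℂ)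
      (X : Matrix A0 A0 ℂ) (Y : Matrix E E ℂ), tensorExt N (X ⊗ₖ Y) = (N X) ⊗ₖ Y)
    (hMISC : ∀ M : Matrix A0 A0 ℂ →ₗ[ℂ] Matrix A1 A1 ℂ,
      IsChannel M → IsClassical M →
        IsChannel (G ∘ₗ tensorExt M ∘ₗ F) ∧ IsClassical (G ∘ₗ tensorExt M ∘ₗ F)) :
    ∀ N : Matrix A0 A0 ℂ →ₗ[ℂ] Matrix A1 A1 ℂ, IsChannel N →
      coherenceRobust (G ∘ₗ tensorExt N ∘ₗ F) ≤ coherenceRobust N := by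
  intro N hN
  refine csInf_le_csInf ⟨0, fun x hx => hx.1⟩ ?_ ?_
  · -- the feasible set for N is nonempty
    have hPSDN : (choi N).PosSemidef := hN.1
    set lam := hPSDN.1.eigenvalues with hlam
    set c : ℝ := ∑ i, lam i with hc
    have hnonneg : ∀ i, 0 ≤ lam i := fun i => hPSDN.eigenvalues_nonneg i
    have hcle : ∀ i, lam i ≤ c := fun i =>
      Finset.single_le_sum (fun j _ => hnonneg j) (Finset.mem_univ i)
    have hc0 : 0 ≤ c := Finset.sum_nonneg fun i _ => hnonneg i
    have hn : (Fintype.card A1 : ℂ) ≠ 0 := by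
      exact_mod_cast Nat.cast_ne_zero.mpr Fintype.card_ne_zero
    refine ⟨(Fintype.card A1 : ℝ) * c, ⟨by positivity, unifChan A0 A1, unifChan_channel,
      unifChan_classical, ?_⟩⟩
    rw [real_smul_mat, choi_unifChan, smul_smul]
    have hval : ((((Fintype.card A1 : ℝ) * c : ℝ)) : ℂ) * (Fintype.card A1 : ℂ)⁻¹ = (c : ℂ) := by
      push_cast
      field_simp
    rw [hval]
    exact smul_one_sub_psd hPSDN hcle
  · -- inclusion of feasible sets
    rintro t ⟨ht0, E₀, hE₀chan, hE₀cl, hPSD⟩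
    obtain ⟨hΘchan, hΘcl⟩ := hMISC E₀ hE₀chan hE₀cl
    refine ⟨ht0, G ∘ₗ tensorExt E₀ ∘ₗ F, hΘchan, hΘcl, ?_⟩
    set Δ : Matrix (A0 × E) (A0 × E) ℂ →ₗ[ℂ] Matrix (A1 × E) (A1 × E) ℂ :=
      (t : ℂ) • tensorExt E₀ - tensorExt N with hΔ
    have hΔCP : IsCP Δ := by
      rw [IsCP, hΔ, choi_subL, choi_smulL, choi_tensorExt (tensorExt E₀) E₀ (hext E₀),
        choi_tensorExt (tensorExt N) N (hext N)]
      have hfactor : (t : ℂ) • (kmat A0 A1 E * choi E₀ * (kmat A0 A1 E)ᴴ)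
            - kmat A0 A1 E * choi N * (kmat A0 A1 E)ᴴ
          = kmat A0 A1 E * ((t : ℂ) • choi E₀ - choi N) * (kmat A0 A1 E)ᴴ := by
        simp [Matrix.mul_sub, Matrix.sub_mul, Matrix.smul_mul, Matrix.mul_smul]
      rw [hfactor]
      have hP : ((t : ℂ) • choi E₀ - choi N).PosSemidef := by
        rw [← real_smul_mat]
        exact hPSD
      exact hP.mul_mul_conjTranspose_same _
    have hcomp : IsCP (G ∘ₗ Δ ∘ₗ F) := isCP_comp (isCP_comp hF.1 hΔCP) hG.1
    have hGΔF : G ∘ₗ Δ ∘ₗ F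
        = (t : ℂ) • (G ∘ₗ tensorExt E₀ ∘ₗ F) - (G ∘ₗ tensorExt N ∘ₗ F) := by
      refine LinearMap.ext fun X => ?_
      simp [hΔ, LinearMap.comp_apply, LinearMap.sub_apply, LinearMap.smul_apply, map_sub,
        _root_.map_smul]
    rw [real_smul_mat, ← choi_smulL, ← choi_subL, ← hGΔF]
    exact hcomp


end
end
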